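/- Suppose (L,σ) satisfies the twisted action condition (F1). Then the map χ_{(L,σ)}: 𝒢⁽³⁾ → Z(𝒩) defined by χ_{(L,σ)}(x,y,z) = L_x(σ(y,z))σ(x,yz)σ(xy,z)⁻¹σ(x,y)⁻¹ is a 3-cocycle in Z³(𝒢, Z(𝒩))_L, i.e. for all composable quadruples (x,y,z,w): L_x(χ(y,z,w))·χ(xy,z,w)⁻¹·χ(x,yz,w)·χ(x,y,zw)⁻¹·χ(x,y,z) = 1. -/

import Mathlib

/-- A groupoid over a unit space `U`, with a total (junk-valued outside composables)
multiplication. `e : U → G` is the inclusion of units. -/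
structure Gpd (G U : Type) where
  s : G → U
  r : G → U
  e : U → G
  mul : G → G → G
  inv : G → G
  s_e : ∀ u, s (e u) = u
  r_e : ∀ u, r (e u) = u
  e_mul : ∀ x, mul (e (r x)) x = x
  mul_e : ∀ x, mul x (e (s x)) = x
  s_inv : ∀ x, s (inv x) = r x
  r_inv : ∀ x, r (inv x) = s x
  inv_mul : ∀ x, mul (inv x) x = e (s x)
  mul_inv : ∀ x, mul x (inv x) = e (r x)
  r_mul : ∀ x y, s x = r y → r (mul x y) = r x
  s_mul : ∀ x y, s x = r y → s (mul x y) = s y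
  assoc : ∀ x y z, s x = r y → s y = r z → mul (mul x y) z = mul x (mul y z)

/-- A group bundle over `U`: a total space `N` with projection `p`, each fiber being a group
(operations are total, with group laws holding fiberwise). -/
structure GrpBundle (N U : Type) where
  p : N → U
  one : U → N
  mul : N → N → N
  inv : N → N
  p_one : ∀ u, p (one u) = u
  p_mul : ∀ n m, p n = p m → p (mul n m) = p n
  p_inv : ∀ n, p (inv n) = p n
  one_mul : ∀ n, mul (one (p n)) n = n
  mul_one : ∀ n, mul n (one (p n)) = n
  inv_mul : ∀ n, mul (inv n) n = one (p n)
  mul_inv : ∀ n, mul n (inv n) = one (p n)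
  assoc : ∀ a b c, p a = p b → p b = p c → mul (mul a b) c = mul a (mul b c)

/-- A pair `(L, σ)` satisfying all the conditions of a factor system for `(𝒢, 𝒩)` except
possibly the twisted cocycle condition (F2): `L` is a family of fiberwise group isomorphisms
`L x : N_{s x} → N_{r x}`, trivial on units, and `σ : 𝒢⁽²⁾ → 𝒩` is normalized with
`σ (x, y) ∈ N_{r x}`, satisfying the twisted action condition (F1). -/
structure PreFS {G U N : Type} (𝒢 : Gpd G U) (𝒩 : GrpBundle N U) where
  L : G → N → N
  σ : G → G → N
  L_fib : ∀ x n, 𝒩.p n = 𝒢.s x → 𝒩.p (L x n) = 𝒢.r x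
  L_mul : ∀ x n m, 𝒩.p n = 𝒢.s x → 𝒩.p m = 𝒢.s x →
    L x (𝒩.mul n m) = 𝒩.mul (L x n) (L x m)
  L_bij : ∀ x, Set.BijOn (L x) {n | 𝒩.p n = 𝒢.s x} {n | 𝒩.p n = 𝒢.r x}
  L_e : ∀ u n, 𝒩.p n = u → L (𝒢.e u) n = n
  σ_fib : ∀ x y, 𝒢.s x = 𝒢.r y → 𝒩.p (σ x y) = 𝒢.r x
  σ_e_left : ∀ x, σ (𝒢.e (𝒢.r x)) x = 𝒩.one (𝒢.r x)
  σ_e_right : ∀ x, σ x (𝒢.e (𝒢.s x)) = 𝒩.one (𝒢.r x)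
  F1 : ∀ x y n, 𝒢.s x = 𝒢.r y → 𝒩.p n = 𝒢.s y →
    L x (L y n) = 𝒩.mul (𝒩.mul (σ x y) (L (𝒢.mul x y) n)) (𝒩.inv (σ x y))

/-- A factor system `(L, σ)` for `(𝒢, 𝒩)`: conditions (F1) and (F2). -/
structure FS {G U N : Type} (𝒢 : Gpd G U) (𝒩 : GrpBundle N U) extends PreFS 𝒢 𝒩 where
  F2 : ∀ x y z, 𝒢.s x = 𝒢.r y → 𝒢.s y = 𝒢.r z →
    𝒩.mul (σ x y) (σ (𝒢.mul x y) z) = 𝒩.mul (L x (σ y z)) (σ x (𝒢.mul y z))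

/-- `χ_{(L,σ)}(x,y,z) = L_x(σ(y,z)) σ(x,yz) σ(xy,z)⁻¹ σ(x,y)⁻¹`. -/
def chi {G U N : Type} (𝒢 : Gpd G U) (𝒩 : GrpBundle N U)
    (L : G → N → N) (σ : G → G → N) (x y z : G) : N :=
  𝒩.mul (𝒩.mul (𝒩.mul (L x (σ y z)) (σ x (𝒢.mul y z)))
    (𝒩.inv (σ (𝒢.mul x y) z))) (𝒩.inv (σ x y))

/-!
By (F1), `L_x ∘ L_y ∘ L_z` is `L_{xyz}` followed by conjugation with `L_x(σ(y,z)) σ(x,yz)`, and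
also followed by conjugation with `σ(x,y) σ(xy,z)`. Since `L_{xyz}` maps onto the fiber over `r x`,
the quotient `χ(x,y,z)` of these two elements is central. The cocycle identity then comes from
expanding `L_x(L_y(σ(z,w))) L_x(σ(y,zw)) σ(x,yzw)` in two ways, where centrality is what lets the
χ-values be moved out of the way. All computations take place in the fiber groups `𝒩.Fib u`.
-/

variable {G U N : Type}

theorem Subgroup.mul_inv_mem_center_of_conj_eq {M : Type*} [Group M] {a b : M}
    (h : ∀ m, a * m * a⁻¹ = b * m * b⁻¹) : a * b⁻¹ ∈ Subgroup.center M := by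
  refine Subgroup.mem_center_iff.2 fun g => ?_
  have := h (b⁻¹ * g * b)
  calc g * (a * b⁻¹) = a * (b⁻¹ * g * b) * a⁻¹ * (a * b⁻¹) := by rw [this]; group
    _ = a * b⁻¹ * g := by group

/-- The group-theoretic core of the cocycle identity: `c₁, …, c₅` are its five factors written out
in terms of `σ` and `L`, and `hD` is (F1). -/
theorem pentagon_eq_one {M : Type*} [Group M] {A B D E K S₁ S₂ S₃ T₁ T₂ T₃ c₁ c₂ c₃ c₄ c₅ : M}
    (h₁ : c₁ = D * E * B⁻¹ * A⁻¹) (h₂ : c₂ = K * T₃ * S₃⁻¹ * S₂⁻¹)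
    (h₃ : c₃ = B * T₂ * S₃⁻¹ * T₁⁻¹) (h₄ : c₄ = E * T₂ * T₃⁻¹ * S₁⁻¹)
    (h₅ : c₅ = A * T₁ * S₂⁻¹ * S₁⁻¹) (hD : D = S₁ * K * S₁⁻¹)
    (hc₂ : c₂ ∈ Subgroup.center M) (hc₃ : c₃ ∈ Subgroup.center M)
    (hc₄ : c₄ ∈ Subgroup.center M) :
    c₁ * c₂⁻¹ * c₃ * c₄⁻¹ * c₅ = 1 := by
  have comm {c : M} (hc : c ∈ Subgroup.center M) (g : M) : g * c = c * g :=
    Subgroup.mem_center_iff.1 hc g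
  -- both sides, multiplied by `S₁ S₂ S₃`, equal `D E T₂`
  have key : c₄ * c₂ = c₁ * c₃ * c₅ := by
    refine mul_right_cancel (b := S₁ * S₂ * S₃) ?_
    calc c₄ * c₂ * (S₁ * S₂ * S₃) = c₄ * (c₂ * S₁) * S₂ * S₃ := by group
      _ = c₄ * S₁ * K * T₃ := by rw [← comm hc₂, h₂]; group
      _ = (c₄ * D) * S₁ * T₃ := by rw [hD]; group
      _ = D * E * T₂ := by rw [← comm hc₄, h₄]; group
      _ = c₁ * (A * c₃) * T₁ * S₃ := by rw [h₁, h₃]; group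
      _ = c₁ * c₃ * c₅ * (S₁ * S₂ * S₃) := by rw [comm hc₃, h₅]; group
  calc c₁ * c₂⁻¹ * c₃ * c₄⁻¹ * c₅ = c₁ * (c₂⁻¹ * (c₃ * (c₄⁻¹ * c₅))) := by group
    _ = c₁ * c₃ * c₅ * (c₂ * c₄)⁻¹ := by
      rw [← comm (inv_mem hc₂), ← comm (inv_mem hc₄)]; group
    _ = 1 := by rw [← comm hc₂, key, mul_inv_cancel]

namespace GrpBundle

variable (𝒩 : GrpBundle N U)

abbrev Fib (u : U) : Type := {n : N // 𝒩.p n = u}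

instance (u : U) : Group (𝒩.Fib u) where
  mul a b := ⟨𝒩.mul a b, (𝒩.p_mul a b (a.2.trans b.2.symm)).trans a.2⟩
  one := ⟨𝒩.one u, 𝒩.p_one u⟩
  inv a := ⟨𝒩.inv a, (𝒩.p_inv a).trans a.2⟩
  mul_assoc a b c := Subtype.ext (𝒩.assoc a b c (a.2.trans b.2.symm) (b.2.trans c.2.symm))
  one_mul a := Subtype.ext (by have := 𝒩.one_mul a.1; rwa [a.2] at this)
  mul_one a := Subtype.ext (by have := 𝒩.mul_one a.1; rwa [a.2] at this)
  inv_mul_cancel a := Subtype.ext (by have := 𝒩.inv_mul a.1; rwa [a.2] at this)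

open Classical in
/-- Elements outside the fiber over `u` are sent to `1`. -/
noncomputable def toFib (u : U) (n : N) : 𝒩.Fib u := if h : 𝒩.p n = u then ⟨n, h⟩ else 1

variable {𝒩} {u : U} {a b : N}

theorem toFib_eq_mk (h : 𝒩.p a = u) : 𝒩.toFib u a = ⟨a, h⟩ := dif_pos h

theorem toFib_val (m : 𝒩.Fib u) : 𝒩.toFib u m.1 = m := toFib_eq_mk m.2

theorem toFib_mul (ha : 𝒩.p a = u) (hb : 𝒩.p b = u) :
    𝒩.toFib u (𝒩.mul a b) = 𝒩.toFib u a * 𝒩.toFib u b := by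
  rw [toFib_eq_mk ha, toFib_eq_mk hb, toFib_eq_mk ((𝒩.p_mul a b (ha.trans hb.symm)).trans ha)]
  rfl

theorem toFib_inv (ha : 𝒩.p a = u) : 𝒩.toFib u (𝒩.inv a) = (𝒩.toFib u a)⁻¹ := by
  rw [toFib_eq_mk ha, toFib_eq_mk ((𝒩.p_inv a).trans ha)]
  rfl

theorem eq_one_of_toFib_eq_one (ha : 𝒩.p a = u) (h : 𝒩.toFib u a = 1) : a = 𝒩.one u := by
  rw [toFib_eq_mk ha] at h
  exact congrArg Subtype.val h

end GrpBundle

-- With these, `simp` determines the fiber of a composite expression.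
attribute [local simp] Gpd.r_mul Gpd.s_mul GrpBundle.p_mul GrpBundle.p_inv PreFS.σ_fib PreFS.L_fib

namespace PreFS

variable {𝒢 : Gpd G U} {𝒩 : GrpBundle N U} (P : PreFS 𝒢 𝒩)

def fibHom (x : G) : 𝒩.Fib (𝒢.s x) →* 𝒩.Fib (𝒢.r x) :=
  MonoidHom.mk' (fun n => ⟨P.L x n, P.L_fib x n n.2⟩) fun a b => Subtype.ext (P.L_mul x a b a.2 b.2)

theorem L_inv {x : G} {n : N} (hn : 𝒩.p n = 𝒢.s x) : P.L x (𝒩.inv n) = 𝒩.inv (P.L x n) :=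
  (congrArg Subtype.val (map_inv (P.fibHom x) ⟨n, hn⟩) :)

variable {x y z w : G}

@[simp] theorem p_chi (hxy : 𝒢.s x = 𝒢.r y) (hyz : 𝒢.s y = 𝒢.r z) :
    𝒩.p (chi 𝒢 𝒩 P.L P.σ x y z) = 𝒢.r x := by
  simp (maxDischargeDepth := 10) [chi, *]

theorem toFib_L_L {n : N} {u : U} (hu : 𝒢.r x = u) (hxy : 𝒢.s x = 𝒢.r y)
    (hn : 𝒩.p n = 𝒢.s y) :
    𝒩.toFib u (P.L x (P.L y n)) =
      𝒩.toFib u (P.σ x y) * 𝒩.toFib u (P.L (𝒢.mul x y) n) * (𝒩.toFib u (P.σ x y))⁻¹ := by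
  subst hu
  rw [P.F1 x y n hxy hn]
  simp (disch := simp (maxDischargeDepth := 10) [*]) only [GrpBundle.toFib_mul, GrpBundle.toFib_inv]

theorem toFib_chi (hxy : 𝒢.s x = 𝒢.r y) (hyz : 𝒢.s y = 𝒢.r z) :
    𝒩.toFib (𝒢.r x) (chi 𝒢 𝒩 P.L P.σ x y z) =
      𝒩.toFib (𝒢.r x) (P.L x (P.σ y z)) * 𝒩.toFib (𝒢.r x) (P.σ x (𝒢.mul y z)) *
        (𝒩.toFib (𝒢.r x) (P.σ (𝒢.mul x y) z))⁻¹ * (𝒩.toFib (𝒢.r x) (P.σ x y))⁻¹ := by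
  simp (disch := simp (maxDischargeDepth := 10) [*]) only [chi, GrpBundle.toFib_mul,
    GrpBundle.toFib_inv]

theorem toFib_L_chi (hxy : 𝒢.s x = 𝒢.r y) (hyz : 𝒢.s y = 𝒢.r z) (hzw : 𝒢.s z = 𝒢.r w) :
    𝒩.toFib (𝒢.r x) (P.L x (chi 𝒢 𝒩 P.L P.σ y z w)) =
      𝒩.toFib (𝒢.r x) (P.L x (P.L y (P.σ z w))) * 𝒩.toFib (𝒢.r x) (P.L x (P.σ y (𝒢.mul z w))) *
        (𝒩.toFib (𝒢.r x) (P.L x (P.σ (𝒢.mul y z) w)))⁻¹ *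
        (𝒩.toFib (𝒢.r x) (P.L x (P.σ y z)))⁻¹ := by
  simp (disch := simp (maxDischargeDepth := 10) [*]) only [chi, P.L_mul, P.L_inv,
    GrpBundle.toFib_mul, GrpBundle.toFib_inv]

theorem toFib_chi_mem_center (hxy : 𝒢.s x = 𝒢.r y) (hyz : 𝒢.s y = 𝒢.r z) :
    𝒩.toFib (𝒢.r x) (chi 𝒢 𝒩 P.L P.σ x y z) ∈ Subgroup.center (𝒩.Fib (𝒢.r x)) := by
  set A := 𝒩.toFib (𝒢.r x) (P.L x (P.σ y z)) * 𝒩.toFib (𝒢.r x) (P.σ x (𝒢.mul y z))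
  set B := 𝒩.toFib (𝒢.r x) (P.σ x y) * 𝒩.toFib (𝒢.r x) (P.σ (𝒢.mul x y) z)
  have hconj : ∀ m, A * m * A⁻¹ = B * m * B⁻¹ := by
    intro m
    obtain ⟨n, hn, hm⟩ := (P.L_bij (𝒢.mul x (𝒢.mul y z))).surjOn
      (show 𝒩.p m.1 = 𝒢.r (𝒢.mul x (𝒢.mul y z)) by simp [m.2, *])
    replace hn : 𝒩.p n = 𝒢.s z := by simpa [hxy, hyz] using hn
    have left : 𝒩.toFib (𝒢.r x) (P.L x (P.L y (P.L z n))) =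
        A * 𝒩.toFib (𝒢.r x) (P.L (𝒢.mul x (𝒢.mul y z)) n) * A⁻¹ := by
      rw [P.F1 y z n hyz hn]
      simp (disch := simp (maxDischargeDepth := 10) [*]) only [P.L_mul, P.L_inv,
        GrpBundle.toFib_mul, GrpBundle.toFib_inv]
      rw [P.toFib_L_L rfl (by simp [*]) (by simp [*])]
      simp only [A]
      group
    have right : 𝒩.toFib (𝒢.r x) (P.L x (P.L y (P.L z n))) =
        B * 𝒩.toFib (𝒢.r x) (P.L (𝒢.mul x (𝒢.mul y z)) n) * B⁻¹ := by
      rw [P.toFib_L_L rfl hxy (by simp [*]), P.toFib_L_L (by simp [*]) (by simp [*]) hn,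
        𝒢.assoc x y z hxy hyz]
      simp only [B]
      group
    rw [← GrpBundle.toFib_val m, ← hm, ← left, right]
  rw [P.toFib_chi hxy hyz]
  convert Subgroup.mul_inv_mem_center_of_conj_eq hconj using 1
  simp only [A, B]
  group

end PreFS

/-- If `(L,σ)` satisfies the twisted action condition (F1), then
`χ_{(L,σ)}` is a 3-cocycle: for every composable quadruple `(x,y,z,w)`,
`L_x(χ(y,z,w)) · χ(xy,z,w)⁻¹ · χ(x,yz,w) · χ(x,y,zw)⁻¹ · χ(x,y,z) = 1`. -/
theorem stmt12 {G U N : Type} (𝒢 : Gpd G U) (𝒩 : GrpBundle N U) (P : PreFS 𝒢 𝒩) :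
    ∀ x y z w, 𝒢.s x = 𝒢.r y → 𝒢.s y = 𝒢.r z → 𝒢.s z = 𝒢.r w →
      𝒩.mul (𝒩.mul (𝒩.mul (𝒩.mul
        (P.L x (chi 𝒢 𝒩 P.L P.σ y z w))
        (𝒩.inv (chi 𝒢 𝒩 P.L P.σ (𝒢.mul x y) z w)))
        (chi 𝒢 𝒩 P.L P.σ x (𝒢.mul y z) w))
        (𝒩.inv (chi 𝒢 𝒩 P.L P.σ x y (𝒢.mul z w))))
        (chi 𝒢 𝒩 P.L P.σ x y z) = 𝒩.one (𝒢.r x) := by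
  intro x y z w hxy hyz hzw
  have hxy_z : 𝒢.s (𝒢.mul x y) = 𝒢.r z := by simp [*]
  have hx_yz : 𝒢.s x = 𝒢.r (𝒢.mul y z) := by simp [*]
  have hy_zw : 𝒢.s y = 𝒢.r (𝒢.mul z w) := by simp [*]
  have hyz_w : 𝒢.s (𝒢.mul y z) = 𝒢.r w := by simp [*]
  refine GrpBundle.eq_one_of_toFib_eq_one (by simp (maxDischargeDepth := 10) [*]) ?_
  simp (disch := simp (maxDischargeDepth := 10) [*]) only [GrpBundle.toFib_mul, GrpBundle.toFib_inv]
  have h₂ := P.toFib_chi hxy_z hzw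
  have hc₂ := P.toFib_chi_mem_center hxy_z hzw
  rw [𝒢.r_mul x y hxy] at h₂ hc₂
  have h₃ := P.toFib_chi hx_yz hyz_w
  rw [𝒢.assoc y z w hyz hzw, ← 𝒢.assoc x y z hxy hyz] at h₃
  exact pentagon_eq_one (P.toFib_L_chi hxy hyz hzw) h₂ h₃ (P.toFib_chi hxy hy_zw)
    (P.toFib_chi hxy hyz) (P.toFib_L_L rfl hxy (by simp [*])) hc₂
    (P.toFib_chi_mem_center hx_yz hyz_w) (P.toFib_chi_mem_center hxy hy_zw)
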